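/- For the polynomial W(x,y) = x^{4m+4}y^{4m+4}(x⁴−y⁴)^{4m}(x⁸+14x⁴y⁴+y⁸) with m a nonnegative integer, every coefficient of x^i y^{24m+16−i} with i ≡ 0 (mod 4) and 4m+4 ≤ i ≤ 20m+12 is nonzero, provided m ≤ 163. -/

import Mathlib

/-!
Setting the second variable to `1` turns the homogeneous polynomial `W` into
`x ^ (4m+4) * f(x⁴)` with `f = (1 - z) ^ n * (1 + 14 z + z ^ 2)`, `n = 4m`. Up to sign the
coefficient of `z ^ (k+2)` in `f` is `c = C(n,k) - 14 C(n,k+1) + C(n,k+2)`, and eliminating the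
binomial coefficients by the ratios `C(n,j+1) (j+1) = C(n,j) (n-j)` gives
`(k+1)(k+2) c = C(n,k) ((n+1)(n+2) - 16 (n-k)(k+2))`.
As `(4m+1)(4m+2) ≡ 2 (mod 4)`, the right-hand side never vanishes.
-/

open MvPolynomial

noncomputable abbrev Wpoly (m : ℕ) : MvPolynomial (Fin 2) ℚ :=
  (X 0)^(4 * m + 4) * (X 1)^(4 * m + 4) * ((X 0)^4 - (X 1)^4)^(4 * m)
    * ((X 0)^8 + 14 * (X 0)^4 * (X 1)^4 + (X 1)^8)

theorem Nat.choose_sub_fourteen_mul_choose_add_choose_ne_zero {n k : ℕ}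
    (hn : ¬16 ∣ (n + 1) * (n + 2)) (hk : k ≤ n) :
    (n.choose k : ℤ) - 14 * n.choose (k + 1) + n.choose (k + 2) ≠ 0 := by
  intro hc
  have h₁ : (n.choose (k + 1) : ℤ) * (k + 1) = n.choose k * (n - k) := by
    have h := Nat.choose_succ_right_eq n k
    zify [hk] at h
    exact h
  have h₂ : (n.choose (k + 2) : ℤ) * (k + 2) = n.choose (k + 1) * (n - (k + 1)) := by
    rcases hk.eq_or_lt with rfl | hlt
    · simp [Nat.choose_eq_zero_of_lt]
    · have h := Nat.choose_succ_right_eq n (k + 1)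
      zify [Nat.succ_le_of_lt hlt] at h
      linear_combination h
  have key : (n.choose k : ℤ) * ((n + 1) * (n + 2) - 16 * (n - k) * (k + 2)) = 0 := by
    linear_combination ((k : ℤ) + 1) * (k + 2) * hc + (14 * ((k : ℤ) + 2) - (n - k - 1)) * h₁
      - ((k : ℤ) + 1) * h₂
  have hchoose : (n.choose k : ℤ) ≠ 0 := by exact_mod_cast (Nat.choose_pos hk).ne'
  have hQ : ((n + 1) * (n + 2) - 16 * (n - k) * (k + 2) : ℤ) = 0 :=
    (mul_eq_zero_iff_left hchoose).mp key
  refine hn ⟨(n - k) * (k + 2), ?_⟩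
  zify [hk]
  linear_combination hQ

namespace Polynomial

variable (R : Type*) [CommRing R]

noncomputable def reducedW (n : ℕ) : R[X] := (1 - X) ^ n * (1 + 14 * X + X ^ 2)

variable {R}

theorem coeff_one_sub_X_pow (n k : ℕ) :
    ((1 - X) ^ n : R[X]).coeff k = (-1) ^ k * n.choose k := by
  have : (1 - X : R[X]) ^ n = ((1 + X) ^ n).comp (C (-1) * X) := by simp [sub_eq_add_neg]
  rw [this, comp_C_mul_X_coeff, coeff_one_add_X_pow, mul_comm]

theorem coeff_reducedW_zero (n : ℕ) : (reducedW R n).coeff 0 = 1 := by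
  simp [reducedW, mul_add, ← mul_assoc, mul_comm _ (14 : R[X]), coeff_ofNat_mul,
    coeff_one_sub_X_pow]

theorem coeff_reducedW_one (n : ℕ) : (reducedW R n).coeff 1 = 14 - n := by
  simp [reducedW, mul_add, ← mul_assoc, coeff_mul_X, coeff_mul_X_pow', mul_comm _ (14 : R[X]),
    coeff_ofNat_mul, coeff_one_sub_X_pow]
  ring

theorem coeff_reducedW_add_two (n k : ℕ) :
    (reducedW R n).coeff (k + 2) =
      (-1) ^ k * (n.choose k - 14 * n.choose (k + 1) + n.choose (k + 2)) := by
  simp only [reducedW, mul_add, mul_one, coeff_add, coeff_mul_X_pow, ← mul_assoc, coeff_mul_X,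
    mul_comm _ (14 : R[X]), coeff_ofNat_mul, coeff_one_sub_X_pow]
  ring

theorem coeff_reducedW_ne_zero [CharZero R] {n k : ℕ} (hn : ¬16 ∣ (n + 1) * (n + 2))
    (hk : k ≤ n + 2) : (reducedW R n).coeff k ≠ 0 := by
  match k, hk with
  | 0, _ => simp [coeff_reducedW_zero]
  | 1, _ =>
    have hn14 : n ≠ 14 := by rintro rfl; exact hn (by norm_num)
    rw [coeff_reducedW_one, sub_ne_zero]
    exact_mod_cast hn14.symm
  | k + 2, hk =>
    have hc := Nat.choose_sub_fourteen_mul_choose_add_choose_ne_zero hn (by omega : k ≤ n)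
    rw [coeff_reducedW_add_two, Ne, (isUnit_neg_one.pow k).mul_right_eq_zero]
    exact_mod_cast hc

end Polynomial

theorem isHomogeneous_Wpoly (m : ℕ) : (Wpoly m).IsHomogeneous (24 * m + 16) := by
  have h14 : (14 : MvPolynomial (Fin 2) ℚ).IsHomogeneous 0 := isHomogeneous_C _ 14
  have := (((isHomogeneous_X_pow 0 (4 * m + 4)).mul (isHomogeneous_X_pow 1 (4 * m + 4))).mul
    (((isHomogeneous_X_pow (R := ℚ) 0 4).sub (isHomogeneous_X_pow 1 4)).pow (4 * m))).mul
    (((isHomogeneous_X_pow 0 8).add ((h14.mul (isHomogeneous_X_pow 0 4)).mul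
      (isHomogeneous_X_pow 1 4))).add (isHomogeneous_X_pow 1 8))
  rwa [show 4 * m + 4 + (4 * m + 4) + 4 * (4 * m) + 8 = 24 * m + 16 by ring] at this

theorem aeval_X_one_Wpoly (m : ℕ) :
    aeval ![Polynomial.X, 1] (Wpoly m) = Polynomial.X ^ (4 * m + 4) *
      Polynomial.expand ℚ 4 (Polynomial.reducedW ℚ (4 * m)) := by
  have : ((Polynomial.X : Polynomial ℚ) ^ 4 - 1) ^ (4 * m) =
      (1 - Polynomial.X ^ 4) ^ (4 * m) := by
    rw [← neg_sub, Even.neg_pow ⟨2 * m, by ring⟩]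
  simp [Polynomial.reducedW, this, map_ofNat]
  ring

theorem stmt_18_general (m : ℕ) (i : ℕ) (h4 : i % 4 = 0)
    (h1 : 4 * m + 4 ≤ i) (h2 : i ≤ 20 * m + 12) :
    MvPolynomial.coeff
      (Finsupp.single (0 : Fin 2) i + Finsupp.single (1 : Fin 2) (24 * m + 16 - i))
      (Wpoly m) ≠ 0 := by
  obtain ⟨k, hk, rfl⟩ : ∃ k ≤ 4 * m + 2, i = k * 4 + (4 * m + 4) :=
    ⟨(i - (4 * m + 4)) / 4, by omega, by omega⟩
  have hm : ¬16 ∣ (4 * m + 1) * (4 * m + 2) := by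
    intro h
    have := Nat.mod_eq_zero_of_dvd (dvd_trans (by norm_num : 4 ∣ 16) h)
    simp [Nat.mul_mod, Nat.add_mod] at this
  rw [← Polynomial.homogenize_eq_of_isHomogeneous (isHomogeneous_Wpoly m) rfl,
    Polynomial.coeff_homogenize]
  simp only [Finsupp.add_apply, Finsupp.single_eq_same, Finsupp.single_eq_of_ne, ne_eq,
    zero_ne_one, one_ne_zero, not_false_eq_true, add_zero, zero_add]
  rw [if_pos (by omega), aeval_X_one_Wpoly, Polynomial.coeff_X_pow_mul,
    Polynomial.coeff_expand_mul (by norm_num)]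
  exact Polynomial.coeff_reducedW_ne_zero hm hk

theorem stmt_18 (m : ℕ) (hm : m ≤ 163) (i : ℕ) (h4 : i % 4 = 0)
    (h1 : 4 * m + 4 ≤ i) (h2 : i ≤ 20 * m + 12) :
    MvPolynomial.coeff
      (Finsupp.single (0 : Fin 2) i + Finsupp.single (1 : Fin 2) (24 * m + 16 - i))
      (Wpoly m) ≠ 0 :=
  stmt_18_general m i h4 h1 h2
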